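/- arXiv:1702.06666 — 2 statements merged into one kernel-verified Lean document; each statement's English description precedes it below -/
import Mathlib

section
/- For every n ≥ 1, the Eulerian polynomials satisfy Ã_n(t) = Σ_{m=0}^{n} C(n,m) A_m(t) t^{n-m}, where Ã_n(t) = 1 + t Σ_{m=1}^n C(n,m) A_m(t). -/
open Finset Polynomial

open scoped Classical

noncomputable section

/-- The value of `σ` at 0-based position `i`, as a natural number (0-based values). -/
def pv (n : ℕ) (σ : Equiv.Perm (Fin n)) (i : ℕ) : ℕ :=
  if h : i < n then (σ ⟨i, h⟩ : ℕ) else 0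

/-- Descent set of `σ` in 0-based positions: `i` with `σ(i) > σ(i+1)`. -/
def desSet (n : ℕ) (σ : Equiv.Perm (Fin n)) : Finset ℕ :=
  (Finset.range (n - 1)).filter fun i => pv n σ (i + 1) < pv n σ i

def desNum (n : ℕ) (σ : Equiv.Perm (Fin n)) : ℕ := (desSet n σ).card

/-- Major index: the sum of the (1-based) descent positions. -/
def majNum (n : ℕ) (σ : Equiv.Perm (Fin n)) : ℕ := ∑ i ∈ desSet n σ, (i + 1)

/-- Excedance number. -/
def excNum (n : ℕ) (σ : Equiv.Perm (Fin n)) : ℕ :=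
  ((Finset.range n).filter fun i => i < pv n σ i).card

/-- Inversion number. -/
def invNum (n : ℕ) (σ : Equiv.Perm (Fin n)) : ℕ :=
  (((Finset.range n) ×ˢ (Finset.range n)).filter fun p =>
    p.1 < p.2 ∧ pv n σ p.2 < pv n σ p.1).card

/-- `σ` has a double descent: `σ(i) > σ(i+1) > σ(i+2)` for some valid `i`. -/
def HasDoubleDescent (n : ℕ) (σ : Equiv.Perm (Fin n)) : Prop :=
  ∃ i, i + 2 < n ∧ pv n σ (i + 2) < pv n σ (i + 1) ∧ pv n σ (i + 1) < pv n σ i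

/-- `σ` has a final descent: `σ(n-1) > σ(n)` (1-based). -/
def HasFinalDescent (n : ℕ) (σ : Equiv.Perm (Fin n)) : Prop :=
  2 ≤ n ∧ pv n σ (n - 1) < pv n σ (n - 2)

/-- `σ` has an initial descent: `σ(1) > σ(2)` (1-based). -/
def HasInitialDescent (n : ℕ) (σ : Equiv.Perm (Fin n)) : Prop :=
  2 ≤ n ∧ pv n σ 1 < pv n σ 0

/-- The Eulerian polynomial `A_n(t) = ∑_{σ ∈ S_n} t^{des σ}`. -/
def eulerPoly (n : ℕ) : Polynomial ℤ :=
  ∑ σ : Equiv.Perm (Fin n), X ^ desNum n σ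

/-- The binomial-Eulerian polynomial `Ã_n(t) = 1 + t ∑_{m=1}^n C(n,m) A_m(t)`. -/
def binEulerPoly (n : ℕ) : Polynomial ℤ :=
  1 + X * ∑ m ∈ Finset.Icc 1 n, (n.choose m : Polynomial ℤ) * eulerPoly m

/-! ### insertion -/

def insPerm (n : ℕ) (σ : Equiv.Perm (Fin n)) (p : Fin (n + 1)) : Equiv.Perm (Fin (n + 1)) :=
  ((finSuccEquiv' p).trans (Equiv.optionCongr σ)).trans (finSuccEquiv' (Fin.last n)).symm

lemma insPerm_apply_self (n : ℕ) (σ : Equiv.Perm (Fin n)) (p : Fin (n + 1)) :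
    insPerm n σ p p = Fin.last n := by
  simp [insPerm]

lemma insPerm_apply_succAbove (n : ℕ) (σ : Equiv.Perm (Fin n)) (p : Fin (n + 1)) (j : Fin n) :
    insPerm n σ p (p.succAbove j) = (σ j).castSucc := by
  simp [insPerm, Fin.succAbove_last]

lemma pv_insPerm (n : ℕ) (σ : Equiv.Perm (Fin n)) (p : Fin (n + 1)) (i : ℕ) (hi : i ≤ n) :
    pv (n + 1) (insPerm n σ p) i =
      if i = p.val then n else if i < p.val then pv n σ i else pv n σ (i - 1) := by
  have hi1 : i < n + 1 := Nat.lt_succ_of_le hi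
  rcases eq_or_ne i p.val with h | h
  · have : (⟨i, hi1⟩ : Fin (n + 1)) = p := Fin.ext h
    simp only [pv, dif_pos hi1, this, insPerm_apply_self, Fin.val_last, if_pos h]
  · rw [if_neg h]
    rcases lt_or_gt_of_ne h with hlt | hgt
    · -- i < p.val
      have hin : i < n := lt_of_lt_of_le hlt (Nat.lt_succ_iff.mp p.isLt)
      have hc : Fin.castSucc (⟨i, hin⟩ : Fin n) < p := by
        simp [Fin.lt_def, hlt]
      have : (⟨i, hi1⟩ : Fin (n + 1)) = p.succAbove ⟨i, hin⟩ := by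
        rw [Fin.succAbove_of_castSucc_lt _ _ hc]; rfl
      simp only [pv, dif_pos hi1, dif_pos hin, this, insPerm_apply_succAbove,
        Fin.coe_castSucc, if_pos hlt]
    · -- i > p.val
      have h1 : 1 ≤ i := Nat.one_le_iff_ne_zero.mpr (by omega)
      have hin : i - 1 < n := by omega
      have hc : p ≤ Fin.castSucc (⟨i - 1, hin⟩ : Fin n) := by
        simp [Fin.le_def]; omega
      have : (⟨i, hi1⟩ : Fin (n + 1)) = p.succAbove ⟨i - 1, hin⟩ := by
        rw [Fin.succAbove_of_le_castSucc _ _ hc]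
        apply Fin.ext; simp [Fin.val_succ]; omega
      simp only [pv, dif_pos hi1, dif_pos hin, this, insPerm_apply_succAbove,
        Fin.coe_castSucc, if_neg (by omega : ¬ i < p.val)]

lemma pv_lt_n (n : ℕ) (σ : Equiv.Perm (Fin n)) (i : ℕ) (hi : i < n) : pv n σ i < n := by
  simp only [pv, dif_pos hi]
  exact (σ ⟨i, hi⟩).isLt

lemma desSet_insPerm (n : ℕ) (σ : Equiv.Perm (Fin n)) (p : Fin (n + 1)) :
    desSet (n + 1) (insPerm n σ p) =
      ((desSet n σ).image fun i => if i + 1 < (p : ℕ) then i else i + 1) ∪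
        (Finset.range n).filter fun i => i = (p : ℕ) := by
  have hq : (p : ℕ) ≤ n := Nat.lt_succ_iff.mp p.isLt
  ext i
  simp only [desSet, Nat.add_sub_cancel, mem_filter, mem_range, mem_union, mem_image]
  constructor
  · rintro ⟨hin, hdes⟩
    rw [pv_insPerm n σ p i (by omega), pv_insPerm n σ p (i + 1) (by omega)] at hdes
    rcases eq_or_ne i (p : ℕ) with h | h
    · exact Or.inr ⟨hin, h⟩
    · left
      rcases lt_or_gt_of_ne h with hlt | hgt
      · rcases eq_or_ne (i + 1) (p : ℕ) with h2 | h2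
        · exfalso
          rw [if_pos h2, if_neg h, if_pos hlt] at hdes
          exact absurd hdes (not_lt.mpr (le_of_lt (pv_lt_n n σ i (by omega))))
        · have h3 : i + 1 < (p : ℕ) := by omega
          rw [if_neg h2, if_pos h3, if_neg h, if_pos hlt] at hdes
          exact ⟨i, ⟨⟨by omega, hdes⟩, if_pos h3⟩⟩
      · have h2 : i + 1 ≠ (p : ℕ) := by omega
        rw [if_neg h2, if_neg (by omega : ¬ i + 1 < (p : ℕ)), if_neg h,
          if_neg (by omega : ¬ i < (p : ℕ)), Nat.add_sub_cancel] at hdes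
        refine ⟨i - 1, ⟨by omega, ?_⟩, ?_⟩
        · rw [Nat.sub_add_cancel (by omega : 1 ≤ i)]
          exact hdes
        · rw [if_neg (by omega : ¬ i - 1 + 1 < (p : ℕ))]
          omega
  · rintro (⟨a, ha, rfl⟩ | ⟨hin, rfl⟩)
    · obtain ⟨han, hadesc⟩ := ha
      by_cases hc : a + 1 < (p : ℕ)
      · rw [if_pos hc]
        refine ⟨by omega, ?_⟩
        rw [pv_insPerm n σ p a (by omega), pv_insPerm n σ p (a + 1) (by omega),
          if_neg (by omega), if_pos hc, if_neg (by omega), if_pos (by omega)]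
        exact hadesc
      · rw [if_neg hc]
        refine ⟨by omega, ?_⟩
        rw [pv_insPerm n σ p (a + 1) (by omega), pv_insPerm n σ p (a + 1 + 1) (by omega)]
        rcases eq_or_ne (a + 1) (p : ℕ) with h2 | h2
        · rw [if_neg (by omega), if_neg (by omega), if_pos h2, Nat.add_sub_cancel]
          exact pv_lt_n n σ (a + 1) (by omega)
        · rw [if_neg (by omega), if_neg (by omega), if_neg h2, if_neg (by omega),
            Nat.add_sub_cancel, Nat.add_sub_cancel]
          exact hadesc
    · refine ⟨hin, ?_⟩
      rw [pv_insPerm n σ p (p : ℕ) (by omega), pv_insPerm n σ p ((p : ℕ) + 1) (by omega),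
        if_pos rfl, if_neg (by omega), if_neg (by omega), Nat.add_sub_cancel]
      exact pv_lt_n n σ (p : ℕ) hin

lemma desNum_le (n : ℕ) (σ : Equiv.Perm (Fin n)) : desNum n σ ≤ n - 1 := by
  calc (desSet n σ).card ≤ (Finset.range (n - 1)).card := Finset.card_le_card (filter_subset _ _)
  _ = n - 1 := Finset.card_range _

lemma mem_image_succ_iff (n : ℕ) (σ : Equiv.Perm (Fin n)) (q : ℕ) :
    q ∈ (desSet n σ).image (· + 1) ↔ ∃ a ∈ desSet n σ, a + 1 = q := by
  simp [Finset.mem_image]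

lemma desNum_insPerm (n : ℕ) (σ : Equiv.Perm (Fin n)) (p : Fin (n + 1)) :
    desNum (n + 1) (insPerm n σ p) =
      desNum n σ +
        (if (p : ℕ) = n ∨ (p : ℕ) ∈ (desSet n σ).image (· + 1) then 0 else 1) := by
  classical
  have hq : (p : ℕ) ≤ n := Nat.lt_succ_iff.mp p.isLt
  set D := desSet n σ with hD
  set f : ℕ → ℕ := fun i => if i + 1 < (p : ℕ) then i else i + 1 with hf
  have hinj : Set.InjOn f D := by
    intro a _ b _ hab
    simp only [hf] at hab
    split_ifs at hab <;> omega
  have hcardA : (D.image f).card = desNum n σ := Finset.card_image_of_injOn hinj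
  have hmemA : (p : ℕ) ∈ D.image f ↔ ∃ a ∈ D, a + 1 = (p : ℕ) := by
    constructor
    · rintro h
      obtain ⟨a, haD, hfa⟩ := Finset.mem_image.mp h
      refine ⟨a, haD, ?_⟩
      simp only [hf] at hfa
      split_ifs at hfa <;> omega
    · rintro ⟨a, haD, ha⟩
      refine Finset.mem_image.mpr ⟨a, haD, ?_⟩
      simp only [hf]
      split_ifs <;> omega
  rw [desNum, desSet_insPerm, Finset.filter_eq']
  rcases eq_or_ne (p : ℕ) n with hpn | hpn
  · rw [if_neg (by simp [hpn]), Finset.union_empty, hcardA]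
    simp [hpn]
  · have hpmem : (p : ℕ) ∈ Finset.range n := Finset.mem_range.mpr (by omega)
    rw [if_pos hpmem]
    by_cases hin : (p : ℕ) ∈ D.image f
    · have : D.image f ∪ {(p : ℕ)} = D.image f :=
        Finset.union_eq_left.mpr (Finset.singleton_subset_iff.mpr hin)
      rw [this, hcardA, if_pos (Or.inr ((mem_image_succ_iff n σ _).mpr (hmemA.mp hin))), Nat.add_zero]
    · rw [Finset.card_union_of_disjoint (by simpa using hin), hcardA, Finset.card_singleton,
        if_neg]
      rintro (h | h)
      · exact hpn h
      · exact hin (hmemA.mpr ((mem_image_succ_iff n σ _).mp h))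

lemma sum_insPerm (n : ℕ) (σ : Equiv.Perm (Fin n)) :
    ∑ p : Fin (n + 1), (X : Polynomial ℤ) ^ desNum (n + 1) (insPerm n σ p) =
      (desNum n σ + 1) • (X : Polynomial ℤ) ^ desNum n σ +
        (n - desNum n σ) • (X : Polynomial ℤ) ^ (desNum n σ + 1) := by
  classical
  set d := desNum n σ with hd
  set cond : ℕ → Prop := fun q => q = n ∨ q ∈ (desSet n σ).image (· + 1) with hcond
  have step : ∀ p : Fin (n + 1), (X : Polynomial ℤ) ^ desNum (n + 1) (insPerm n σ p) =
      (fun q : ℕ => (X : Polynomial ℤ) ^ (d + if cond q then 0 else 1)) p.val := by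
    intro p
    rw [desNum_insPerm]
  rw [Finset.sum_congr rfl (fun p _ => step p),
    Fin.sum_univ_eq_sum_range (fun q => (X : Polynomial ℤ) ^ (d + if cond q then 0 else 1))
      (n + 1)]
  rw [← Finset.sum_filter_add_sum_filter_not (Finset.range (n + 1)) cond]
  have h1 : (Finset.range (n + 1)).filter cond = insert n ((desSet n σ).image (· + 1)) := by
    ext q
    simp only [hcond, Finset.mem_filter, Finset.mem_range, Finset.mem_insert]
    constructor
    · rintro ⟨-, h | h⟩
      · exact Or.inl h
      · exact Or.inr h
    · rintro (h | h)
      · exact ⟨by omega, Or.inl h⟩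
      · obtain ⟨a, ha, rfl⟩ := Finset.mem_image.mp h
        have : a < n - 1 := Finset.mem_range.mp (Finset.mem_filter.mp ha).1
        exact ⟨by omega, Or.inr h⟩
  have hnotmem : n ∉ (desSet n σ).image (· + 1) := by
    intro h
    obtain ⟨a, ha, han⟩ := Finset.mem_image.mp h
    have : a < n - 1 := Finset.mem_range.mp (Finset.mem_filter.mp ha).1
    omega
  have hcard1 : ((Finset.range (n + 1)).filter cond).card = d + 1 := by
    rw [h1, Finset.card_insert_of_notMem hnotmem,
      Finset.card_image_of_injective _ (add_left_injective 1)]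
    rfl
  have hcard2 : ((Finset.range (n + 1)).filter (fun q => ¬ cond q)).card = n - d := by
    have := Finset.card_filter_add_card_filter_not (s := Finset.range (n + 1)) cond
    rw [Finset.card_range, hcard1] at this
    have hdn : d ≤ n - 1 := desNum_le n σ
    omega
  rw [Finset.sum_congr rfl (fun q hq => by
        rw [if_pos (Finset.mem_filter.mp hq).2, Nat.add_zero]),
    Finset.sum_congr (rfl : (Finset.range (n + 1)).filter (fun q => ¬ cond q) = _)
      (fun q hq => by rw [if_neg (Finset.mem_filter.mp hq).2]),
    Finset.sum_const, Finset.sum_const, hcard1, hcard2]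

lemma insPerm_injective (n : ℕ) :
    Function.Injective (fun x : Equiv.Perm (Fin n) × Fin (n + 1) => insPerm n x.1 x.2) := by
  rintro ⟨σ, p⟩ ⟨σ', p'⟩ h
  simp only at h
  have hp : p = p' := by
    by_contra hne
    have h1 : insPerm n σ p p = insPerm n σ' p' p := by rw [h]
    rw [insPerm_apply_self] at h1
    obtain ⟨j, hj⟩ := Fin.exists_succAbove_eq hne
    rw [← hj, insPerm_apply_succAbove] at h1
    have hv := congrArg Fin.val h1
    simp only [Fin.val_last, Fin.coe_castSucc] at hv
    have hlt := (σ' j).isLt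
    omega
  subst hp
  have hσ : σ = σ' := by
    apply Equiv.ext
    intro j
    have h1 : insPerm n σ p (p.succAbove j) = insPerm n σ' p (p.succAbove j) := by rw [h]
    rw [insPerm_apply_succAbove, insPerm_apply_succAbove] at h1
    exact Fin.castSucc_injective _ h1
  rw [hσ]

lemma eulerPoly_succ (n : ℕ) :
    eulerPoly (n + 1) =
      (1 + n • (X : Polynomial ℤ)) * eulerPoly n +
        X * (1 - X) * derivative (eulerPoly n) := by
  classical
  have hbij : Function.Bijective
      (fun x : Equiv.Perm (Fin n) × Fin (n + 1) => insPerm n x.1 x.2) :=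
    (Fintype.bijective_iff_injective_and_card _).mpr
      ⟨insPerm_injective n, by simp [Fintype.card_perm, Nat.factorial_succ, Nat.mul_comm]⟩
  have h1 : eulerPoly (n + 1) =
      ∑ x : Equiv.Perm (Fin n) × Fin (n + 1),
        (X : Polynomial ℤ) ^ desNum (n + 1) (insPerm n x.1 x.2) :=
    (Fintype.sum_bijective _ hbij _ _ (fun x => rfl)).symm
  rw [h1, Fintype.sum_prod_type]
  rw [Finset.sum_congr rfl (fun σ _ => sum_insPerm n σ)]
  rw [eulerPoly, derivative_sum, Finset.mul_sum, Finset.mul_sum, ← Finset.sum_add_distrib]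
  refine Finset.sum_congr rfl (fun σ _ => ?_)
  have hdn : desNum n σ ≤ n := le_trans (desNum_le n σ) (Nat.sub_le n 1)
  rcases Nat.eq_zero_or_pos (desNum n σ) with h0 | hpos
  · rw [h0]
    simp only [pow_zero, derivative_one, mul_zero, add_zero, mul_one, Nat.sub_zero,
      zero_add, one_smul, nsmul_eq_mul, pow_one]
  · obtain ⟨e, he⟩ : ∃ e, desNum n σ = e + 1 := ⟨desNum n σ - 1, by omega⟩
    have hen : e + 1 ≤ n := he ▸ hdn
    rw [he, derivative_X_pow]
    simp only [nsmul_eq_mul, Nat.add_sub_cancel, map_add, map_one, Polynomial.C_eq_natCast,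
      Nat.cast_add, Nat.cast_one, Nat.cast_sub hen]
    ring

lemma eulerPoly_zero : eulerPoly 0 = 1 := by
  have h : ∀ σ : Equiv.Perm (Fin 0), desNum 0 σ = 0 := by
    intro σ; simp [desNum, desSet]
  rw [eulerPoly, Finset.sum_congr rfl (fun σ _ => by rw [h σ, pow_zero]),
    Finset.sum_const, Finset.card_univ]
  simp

lemma eulerPoly_one : eulerPoly 1 = 1 := by
  have h : ∀ σ : Equiv.Perm (Fin 1), desNum 1 σ = 0 := by
    intro σ; simp [desNum, desSet]
  rw [eulerPoly, Finset.sum_congr rfl (fun σ _ => by rw [h σ, pow_zero]),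
    Finset.sum_const, Finset.card_univ]
  simp

lemma eulerPoly_eq_sum (n : ℕ) (hn : 1 ≤ n) :
    eulerPoly n = ∑ m ∈ Finset.range n,
      (n.choose m : Polynomial ℤ) * eulerPoly m * (X - 1) ^ (n - 1 - m) := by
  induction n, hn using Nat.le_induction with
  | base =>
      rw [eulerPoly_one]
      simp [eulerPoly_zero]
  | succ n hn ih =>
      have hXA : ∑ m ∈ Finset.range (n + 1),
          (n.choose m : Polynomial ℤ) * eulerPoly m * (X - 1) ^ (n - m)
            = X * eulerPoly n := by
        rw [Finset.sum_range_succ, Nat.choose_self, Nat.sub_self, pow_zero, Nat.cast_one,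
          one_mul, mul_one]
        have h2 : ∑ m ∈ Finset.range n,
            (n.choose m : Polynomial ℤ) * eulerPoly m * (X - 1) ^ (n - m)
              = (X - 1) * ∑ m ∈ Finset.range n,
                  (n.choose m : Polynomial ℤ) * eulerPoly m * (X - 1) ^ (n - 1 - m) := by
          rw [Finset.mul_sum]
          refine Finset.sum_congr rfl fun m hm => ?_
          have hm' : m < n := Finset.mem_range.mp hm
          have he : n - m = (n - 1 - m) + 1 := by omega
          rw [he, pow_succ]
          ring
        rw [h2, ← ih]
        ring
      simp only [Nat.add_sub_cancel]
      rw [Finset.sum_range_succ']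
      have hsplit : ∀ i ∈ Finset.range n,
          ((n + 1).choose (i + 1) : Polynomial ℤ) * eulerPoly (i + 1) * (X - 1) ^ (n - (i + 1))
            = (n.choose i : Polynomial ℤ) * eulerPoly (i + 1) * (X - 1) ^ (n - 1 - i)
              + (n.choose (i + 1) : Polynomial ℤ) * eulerPoly (i + 1) * (X - 1) ^ (n - (i + 1)) := by
        intro i hi
        have h1 : (n + 1).choose (i + 1) = n.choose i + n.choose (i + 1) :=
          Nat.choose_succ_succ n i
        have h2 : n - (i + 1) = n - 1 - i := by omega
        rw [h1, h2]
        push_cast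
        ring
      rw [Finset.sum_congr rfl hsplit, Finset.sum_add_distrib]
      have hback : (∑ i ∈ Finset.range n,
            (n.choose (i + 1) : Polynomial ℤ) * eulerPoly (i + 1) * (X - 1) ^ (n - (i + 1)))
          + ((n + 1).choose 0 : Polynomial ℤ) * eulerPoly 0 * (X - 1) ^ (n - 0)
            = X * eulerPoly n := by
        rw [← hXA, Finset.sum_range_succ']
        norm_num
      rw [add_assoc, hback]
      -- goal : eulerPoly (n+1) = ∑ i in range n, C(n,i) A_{i+1} (X-1)^(n-1-i) + X * eulerPoly n
      have hder : ∀ m e : ℕ,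
          derivative ((n.choose m : Polynomial ℤ) * eulerPoly m * (X - 1) ^ e)
            = (n.choose m : Polynomial ℤ) * (derivative (eulerPoly m) * (X - 1) ^ e
                + eulerPoly m * (C (e : ℤ) * (X - 1) ^ (e - 1))) := by
        intro m e
        rw [derivative_mul, derivative_mul, derivative_natCast, derivative_pow]
        simp only [derivative_sub, derivative_X, derivative_one, sub_zero, mul_one]
        ring
      have hrhs : ∑ i ∈ Finset.range n,
          (n.choose i : Polynomial ℤ) * eulerPoly (i + 1) * (X - 1) ^ (n - 1 - i)
            = ∑ i ∈ Finset.range n,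
              (n.choose i : Polynomial ℤ)
                * ((1 + i • (X : Polynomial ℤ)) * eulerPoly i
                    + X * (1 - X) * derivative (eulerPoly i)) * (X - 1) ^ (n - 1 - i) :=
        Finset.sum_congr rfl fun i _ => by rw [eulerPoly_succ i]
      rw [hrhs, eulerPoly_succ n, ih, derivative_sum,
        Finset.sum_congr rfl (fun m _ => hder m (n - 1 - m)),
        Finset.mul_sum, Finset.mul_sum, Finset.mul_sum, ← Finset.sum_add_distrib,
        ← Finset.sum_add_distrib]
      refine Finset.sum_congr rfl fun k hk => ?_
      have hkn : k < n := Finset.mem_range.mp hk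
      rcases eq_or_ne k (n - 1) with hke | hke
      · have he0 : n - 1 - k = 0 := by omega
        have hn1 : n = k + 1 := by omega
        have hcast : (n : Polynomial ℤ) = (k : Polynomial ℤ) + 1 := by
          rw [hn1]; push_cast; ring
        rw [he0, pow_zero, Nat.cast_zero, map_zero]
        simp only [nsmul_eq_mul, hcast]
        ring
      · obtain ⟨e, he⟩ : ∃ e, n - 1 - k = e + 1 := ⟨n - 1 - k - 1, by omega⟩
        have hn2 : n = k + e + 2 := by omega
        have hcast : (n : Polynomial ℤ) = (k : Polynomial ℤ) + (e : Polynomial ℤ) + 2 := by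
          rw [hn2]; push_cast; ring
        rw [he, Nat.add_sub_cancel, pow_succ, Polynomial.C_eq_natCast]
        push_cast
        simp only [nsmul_eq_mul, hcast]
        ring

theorem binEuler_eq_sum_aux (n : ℕ) (hn : 1 ≤ n) :
    binEulerPoly n = ∑ m ∈ Finset.range (n + 1),
      (n.choose m : Polynomial ℤ) * eulerPoly m * X ^ (n - m) := by
  have hX : ∀ m : ℕ, (X : Polynomial ℤ) ^ (n - m)
      = ∑ j ∈ Finset.range (n - m + 1), (X - 1) ^ j * ((n - m).choose j : Polynomial ℤ) := by
    intro m
    have h := add_pow (X - 1 : Polynomial ℤ) 1 (n - m)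
    rw [sub_add_cancel] at h
    rw [h]
    exact Finset.sum_congr rfl fun j _ => by rw [one_pow, mul_one]
  have h1 : ∑ m ∈ Finset.range (n + 1), (n.choose m : Polynomial ℤ) * eulerPoly m * X ^ (n - m)
      = ∑ m ∈ Finset.range (n + 1), ∑ j ∈ Finset.range (n - m + 1),
          (n.choose m : Polynomial ℤ) * ((n - m).choose j : Polynomial ℤ)
            * eulerPoly m * (X - 1) ^ j := by
    refine Finset.sum_congr rfl fun m _ => ?_
    rw [hX m, Finset.mul_sum]
    exact Finset.sum_congr rfl fun j _ => by ring
  have h2 : ∑ m ∈ Finset.range (n + 1), ∑ j ∈ Finset.range (n - m + 1),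
          (n.choose m : Polynomial ℤ) * ((n - m).choose j : Polynomial ℤ)
            * eulerPoly m * (X - 1) ^ j
      = ∑ s ∈ Finset.range (n + 1), ∑ m ∈ Finset.range (s + 1),
          (n.choose m : Polynomial ℤ) * ((n - m).choose (s - m) : Polynomial ℤ)
            * eulerPoly m * (X - 1) ^ (s - m) := by
    rw [Finset.sum_sigma', Finset.sum_sigma']
    refine Finset.sum_nbij' (fun a => ⟨a.1 + a.2, a.1⟩) (fun b => ⟨b.2, b.1 - b.2⟩)
      ?_ ?_ ?_ ?_ ?_
    · rintro ⟨m, j⟩ ha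
      simp only [Finset.mem_sigma, Finset.mem_range] at ha ⊢
      omega
    · rintro ⟨s, m⟩ hb
      simp only [Finset.mem_sigma, Finset.mem_range] at hb ⊢
      omega
    · rintro ⟨m, j⟩ ha
      simp only [Finset.mem_sigma, Finset.mem_range] at ha
      dsimp only
      exact Sigma.mk.inj_iff.mpr ⟨rfl, heq_of_eq (by omega)⟩
    · rintro ⟨s, m⟩ hb
      simp only [Finset.mem_sigma, Finset.mem_range] at hb
      dsimp only
      exact Sigma.mk.inj_iff.mpr ⟨by omega, heq_of_eq rfl⟩
    · rintro ⟨m, j⟩ ha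
      simp only [Finset.mem_sigma, Finset.mem_range] at ha
      have h' : m + j - m = j := by omega
      simp only [h']
  have h3 : ∀ s ∈ Finset.range (n + 1),
      ∑ m ∈ Finset.range (s + 1),
          (n.choose m : Polynomial ℤ) * ((n - m).choose (s - m) : Polynomial ℤ)
            * eulerPoly m * (X - 1) ^ (s - m)
        = (n.choose s : Polynomial ℤ) * (if s = 0 then 1 else X * eulerPoly s) := by
    intro s hs
    have hsn : s ≤ n := by simpa [Nat.lt_succ_iff] using hs
    have hc : ∀ m ∈ Finset.range (s + 1),
        (n.choose m : Polynomial ℤ) * ((n - m).choose (s - m) : Polynomial ℤ)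
          * eulerPoly m * (X - 1) ^ (s - m)
        = (n.choose s : Polynomial ℤ) * ((s.choose m : Polynomial ℤ)
            * eulerPoly m * (X - 1) ^ (s - m)) := by
      intro m hm
      have hms : m ≤ s := by simpa [Nat.lt_succ_iff] using hm
      have hcc := Nat.choose_mul (n := n) hms
      have hcast : (n.choose m : Polynomial ℤ) * ((n - m).choose (s - m) : Polynomial ℤ)
          = (n.choose s : Polynomial ℤ) * (s.choose m : Polynomial ℤ) := by
        rw [← Nat.cast_mul, ← Nat.cast_mul, ← hcc]
      rw [hcast]
      ring
    rw [Finset.sum_congr rfl hc, ← Finset.mul_sum]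
    congr 1
    rcases eq_or_ne s 0 with hs0 | hs0
    · subst hs0
      simp [eulerPoly_zero]
    · rw [if_neg hs0]
      have hs1 : 1 ≤ s := Nat.one_le_iff_ne_zero.mpr hs0
      rw [Finset.sum_range_succ, Nat.choose_self, Nat.sub_self, pow_zero, Nat.cast_one,
        one_mul, mul_one]
      have h4 : ∑ m ∈ Finset.range s,
          (s.choose m : Polynomial ℤ) * eulerPoly m * (X - 1) ^ (s - m)
            = (X - 1) * ∑ m ∈ Finset.range s,
                (s.choose m : Polynomial ℤ) * eulerPoly m * (X - 1) ^ (s - 1 - m) := by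
        rw [Finset.mul_sum]
        refine Finset.sum_congr rfl fun m hm => ?_
        have hm' : m < s := Finset.mem_range.mp hm
        have he : s - m = (s - 1 - m) + 1 := by omega
        rw [he, pow_succ]
        ring
      rw [h4, ← eulerPoly_eq_sum s hs1]
      ring
  rw [h1, h2, Finset.sum_congr rfl h3, Finset.sum_range_succ']
  have h5 : ∑ m ∈ Finset.Icc 1 n, (n.choose m : Polynomial ℤ) * eulerPoly m
      = ∑ k ∈ Finset.range n, (n.choose (k + 1) : Polynomial ℤ) * eulerPoly (k + 1) := by
    refine Finset.sum_nbij' (fun m => m - 1) (fun k => k + 1) ?_ ?_ ?_ ?_ ?_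
    · intro a ha
      simp only [Finset.mem_Icc] at ha
      simp only [Finset.mem_range]
      omega
    · intro a ha
      simp only [Finset.mem_range] at ha
      simp only [Finset.mem_Icc]
      omega
    · intro a ha
      simp only [Finset.mem_Icc] at ha
      omega
    · intro a _
      omega
    · intro a ha
      simp only [Finset.mem_Icc] at ha
      have : a - 1 + 1 = a := by omega
      rw [this]
  have h6 : ∑ k ∈ Finset.range n,
      (n.choose (k + 1) : Polynomial ℤ) * (if k + 1 = 0 then 1 else X * eulerPoly (k + 1))
        = ∑ k ∈ Finset.range n, X * ((n.choose (k + 1) : Polynomial ℤ) * eulerPoly (k + 1)) :=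
    Finset.sum_congr rfl fun k _ => by rw [if_neg (Nat.succ_ne_zero k)]; ring
  rw [h6, if_pos rfl, mul_one, Nat.choose_zero_right, Nat.cast_one, ← Finset.mul_sum, ← h5,
    binEulerPoly]
  exact add_comm _ _

theorem binEuler_eq_sum (n : ℕ) (hn : 1 ≤ n) :
    binEulerPoly n = ∑ m ∈ Finset.range (n + 1),
      (n.choose m : Polynomial ℤ) * eulerPoly m * X ^ (n - m) :=
  binEuler_eq_sum_aux n hn
end
end

section
/- The distribution of the descent number over permutations of S_n equals the distribution of the excedance number: Σ_{σ ∈ S_n} t^{des(σ)} = Σ_{σ ∈ S_n} t^{exc(σ)} for all n ≥ 1. -/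
/-!
Both generating polynomials satisfy the Eulerian recurrence `A₀ = 1`,
`A_{n+1} = (1 + n t) A_n + t (1 - t) A_n'`, whose step sends `t ^ k` to
`(k + 1) t ^ k + (n - k) t ^ (k + 1)`. It therefore suffices to build every `σ ∈ S_{n+1}` exactly
once from some `τ ∈ S_n` and one of `n + 1` choices, in such a way that the statistic of `σ`
equals that of `τ` for exactly `stat τ + 1` of the choices and exceeds it by one for the others.
For descents, insert the new maximum `n` into the one-line notation of `τ`: only placing it at
the end or inside a descent creates no new descent. For excedances, insert `n` into the cycle
notation of `τ` right after `i`: then `i` becomes an excedance, a new one unless it already was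
one or `i = n` (a new fixed point).
-/

open Finset Polynomial

open scoped Classical

noncomputable section

section EulerianStep

variable (R : Type*) [CommRing R]

def eulerianStep (n : ℕ) : R[X] →ₗ[R] R[X] :=
  LinearMap.mulLeft R (1 + n * X) + LinearMap.mulLeft R (X * (1 - X)) ∘ₗ derivative

variable {R}

theorem eulerianStep_apply (n : ℕ) (p : R[X]) :
    eulerianStep R n p = (1 + (n : R[X]) * X) * p + X * (1 - X) * derivative p := by
  simp [eulerianStep, mul_assoc]

theorem X_mul_derivative_X_pow (k : ℕ) : X * derivative (X ^ k : R[X]) = (k : R[X]) * X ^ k := by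
  cases k with
  | zero => simp
  | succ k => rw [derivative_X_pow, C_eq_natCast, Nat.add_sub_cancel]; ring

theorem eulerianStep_X_pow (n k : ℕ) :
    eulerianStep R n (X ^ k) =
      ((n : R[X]) + 1) * X ^ (k + 1) + ((k : R[X]) + 1) * (X ^ k - X ^ (k + 1)) := by
  rw [eulerianStep_apply, mul_right_comm X, X_mul_derivative_X_pow]
  ring

theorem sum_fin_X_pow_ite_mem_insert {n : ℕ} {A : Finset ℕ} (hA : A ⊆ range n) :
    ∑ p : Fin (n + 1), (X : R[X]) ^ (if ↑p ∈ insert n A then #A else #A + 1) =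
      eulerianStep R n (X ^ #A) := by
  have hA' : insert n A ⊆ range (n + 1) := by
    rw [range_add_one]; exact insert_subset_insert n hA
  have hcard : #(insert n A) = #A + 1 :=
    card_insert_of_notMem fun h => by simpa using hA h
  have key : ∀ i, (X : R[X]) ^ (if i ∈ insert n A then #A else #A + 1) =
      X ^ (#A + 1) + if i ∈ insert n A then X ^ #A - X ^ (#A + 1) else 0 := by
    intro i; split_ifs <;> ring
  rw [Fin.sum_univ_eq_sum_range (fun i => (X : R[X]) ^ (if i ∈ insert n A then #A else #A + 1)),
    sum_congr rfl fun i _ => key i, sum_add_distrib, sum_ite_mem, inter_eq_right.mpr hA',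
    sum_const, sum_const, hcard, card_range, eulerianStep_X_pow, nsmul_eq_mul, nsmul_eq_mul]
  push_cast
  ring

theorem sum_X_pow_eq_eulerianStep {n : ℕ}
    {Φ : Equiv.Perm (Fin n) × Fin (n + 1) → Equiv.Perm (Fin (n + 1))} (hΦ : Function.Injective Φ)
    {s : Equiv.Perm (Fin n) → ℕ} {s' : Equiv.Perm (Fin (n + 1)) → ℕ}
    (A : Equiv.Perm (Fin n) → Finset ℕ) (hA : ∀ τ, A τ ⊆ range n) (hs : ∀ τ, #(A τ) = s τ)
    (hΦs : ∀ τ p, s' (Φ (τ, p)) = if ↑p ∈ insert n (A τ) then s τ else s τ + 1) :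
    ∑ σ, (X : R[X]) ^ s' σ = eulerianStep R n (∑ τ, X ^ s τ) := by
  have hbij : Function.Bijective Φ := (Fintype.bijective_iff_injective_and_card Φ).mpr
    ⟨hΦ, by simp [Fintype.card_perm, Nat.factorial_succ, mul_comm]⟩
  rw [← hbij.sum_comp, Fintype.sum_prod_type, map_sum]
  refine sum_congr rfl fun τ _ => ?_
  simp only [hΦs, ← hs]
  exact sum_fin_X_pow_ite_mem_insert (hA τ)

end EulerianStep

section Insertion

variable {n : ℕ}

theorem pv_of_lt {σ : Equiv.Perm (Fin n)} {i : ℕ} (h : i < n) : pv n σ i = σ ⟨i, h⟩ := dif_pos h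

theorem pv_of_le {σ : Equiv.Perm (Fin n)} {i : ℕ} (h : n ≤ i) : pv n σ i = 0 := dif_neg (by omega)

theorem pv_lt {σ : Equiv.Perm (Fin n)} {i : ℕ} (h : i < n) : pv n σ i < n := by
  rw [pv_of_lt h]; exact Fin.isLt _

/-- In one-line notation: `τ` with the new largest value `n` inserted at position `p`. -/
def insertMax (τ : Equiv.Perm (Fin n)) (p : Fin (n + 1)) : Equiv.Perm (Fin (n + 1)) :=
  (finSuccEquiv' p).trans ((Equiv.optionCongr τ).trans (finSuccEquiv' (Fin.last n)).symm)

theorem insertMax_apply_self (τ : Equiv.Perm (Fin n)) (p : Fin (n + 1)) :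
    insertMax τ p p = Fin.last n := by
  simp [insertMax]

theorem insertMax_apply_succAbove (τ : Equiv.Perm (Fin n)) (p : Fin (n + 1)) (k : Fin n) :
    insertMax τ p (p.succAbove k) = (τ k).castSucc := by
  simp [insertMax, Fin.succAbove_last]

theorem insertMax_injective :
    Function.Injective fun x : Equiv.Perm (Fin n) × Fin (n + 1) => insertMax x.1 x.2 := by
  rintro ⟨τ, p⟩ ⟨τ', p'⟩ h
  simp only at h
  have hp : p = p' := (insertMax τ' p').injective <| by
    rw [insertMax_apply_self, ← h, insertMax_apply_self]
  subst hp
  refine Prod.ext (Equiv.ext fun k => Fin.castSucc_injective n ?_) rfl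
  rw [← insertMax_apply_succAbove, ← insertMax_apply_succAbove, h]

theorem pv_insertMax_self (τ : Equiv.Perm (Fin n)) (p : Fin (n + 1)) :
    pv (n + 1) (insertMax τ p) p = n := by
  rw [pv_of_lt p.isLt, Fin.eta, insertMax_apply_self, Fin.val_last]

theorem pv_insertMax_of_lt (τ : Equiv.Perm (Fin n)) {p : Fin (n + 1)} {i : ℕ} (h : i < p) :
    pv (n + 1) (insertMax τ p) i = pv n τ i := by
  have hi : i < n := by omega
  have : (⟨i, by omega⟩ : Fin (n + 1)) = p.succAbove ⟨i, hi⟩ := by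
    rw [Fin.succAbove_of_castSucc_lt _ _ h]; rfl
  rw [pv_of_lt (by omega), pv_of_lt hi, this, insertMax_apply_succAbove, Fin.val_castSucc]

theorem pv_insertMax_succ_of_le (τ : Equiv.Perm (Fin n)) {p : Fin (n + 1)} {i : ℕ} (h : p ≤ i) :
    pv (n + 1) (insertMax τ p) (i + 1) = pv n τ i := by
  by_cases hi : i < n
  · have : (⟨i + 1, by omega⟩ : Fin (n + 1)) = p.succAbove ⟨i, hi⟩ := by
      rw [Fin.succAbove_of_le_castSucc _ _ h]; rfl
    rw [pv_of_lt (by omega), pv_of_lt hi, this, insertMax_apply_succAbove, Fin.val_castSucc]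
  · rw [pv_of_le (by omega), pv_of_le (by omega)]

end Insertion

section Descents

variable {n : ℕ}

theorem desSet_subset_range (σ : Equiv.Perm (Fin n)) : desSet n σ ⊆ range (n - 1) :=
  filter_subset _ _

theorem mem_desSet_insertMax (τ : Equiv.Perm (Fin n)) (p : Fin (n + 1)) (i : ℕ) :
    i ∈ desSet (n + 1) (insertMax τ p) ↔
      (i = p ∧ ↑p < n) ∨ (i + 1 < p ∧ i ∈ desSet n τ) ∨ (p < i ∧ i - 1 ∈ desSet n τ) := by
  simp only [desSet, mem_filter, mem_range, Nat.add_sub_cancel]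
  rcases lt_trichotomy i p with hi | rfl | hi
  · have := pv_lt (σ := τ) (i := i) (by omega)
    rw [pv_insertMax_of_lt τ hi]
    rcases (show i + 1 ≤ p from hi).lt_or_eq with hi' | hi'
    · rw [pv_insertMax_of_lt τ hi']
      omega
    · rw [hi', pv_insertMax_self]
      omega
  · have := pv_lt (σ := τ) (i := p)
    rw [pv_insertMax_self, pv_insertMax_succ_of_le τ le_rfl]
    omega
  · obtain ⟨j, rfl⟩ : ∃ j, i = j + 1 := ⟨i - 1, by omega⟩
    rw [pv_insertMax_succ_of_le τ (i := j) (by omega),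
      pv_insertMax_succ_of_le τ (i := j + 1) (by omega), Nat.add_sub_cancel]
    omega

/-- Where a descent of `τ` at position `j` lands once the maximum is inserted at position `p`. -/
def desShift (p j : ℕ) : ℕ := if j + 1 < p then j else j + 1

theorem desShift_injective (p : ℕ) : Function.Injective (desShift p) := by
  intro a b h
  simp only [desShift] at h
  split_ifs at h <;> omega

theorem mem_image_desShift {D : Finset ℕ} {p i : ℕ} :
    i ∈ D.image (desShift p) ↔ (i + 1 < p ∧ i ∈ D) ∨ (p ≤ i ∧ 0 < i ∧ i - 1 ∈ D) := by
  constructor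
  · intro h
    obtain ⟨j, hj, rfl⟩ := mem_image.mp h
    unfold desShift
    split_ifs with hjp
    · exact Or.inl ⟨hjp, hj⟩
    · exact Or.inr ⟨by omega, by omega, by simpa using hj⟩
  · rintro (⟨h, hi⟩ | ⟨h, h0, hi⟩)
    · exact mem_image.mpr ⟨i, hi, if_pos h⟩
    · exact mem_image.mpr ⟨i - 1, hi, by rw [desShift, if_neg (by omega)]; omega⟩

theorem mem_image_add_one {D : Finset ℕ} {i : ℕ} : i ∈ D.image (· + 1) ↔ 0 < i ∧ i - 1 ∈ D := by
  constructor
  · intro h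
    obtain ⟨j, hj, rfl⟩ := mem_image.mp h
    simpa using hj
  · rintro ⟨h0, hi⟩
    exact mem_image.mpr ⟨i - 1, hi, by omega⟩

theorem desSet_insertMax (τ : Equiv.Perm (Fin n)) (p : Fin (n + 1)) :
    desSet (n + 1) (insertMax τ p) =
      if (p : ℕ) ∈ insert n ((desSet n τ).image (· + 1)) then (desSet n τ).image (desShift p)
      else insert (p : ℕ) ((desSet n τ).image (desShift p)) := by
  have hn : n - 1 ∉ desSet n τ := fun h => by simpa using desSet_subset_range τ h
  ext i
  rw [mem_desSet_insertMax]
  by_cases hi : i = p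
  · subst hi
    split_ifs with h <;>
      simp only [mem_insert, mem_image_add_one, mem_image_desShift] at h ⊢ <;> grind
  · split_ifs with h <;> simp only [mem_insert, mem_image_desShift, hi, false_or] <;> grind

theorem desNum_insertMax (τ : Equiv.Perm (Fin n)) (p : Fin (n + 1)) :
    desNum (n + 1) (insertMax τ p) =
      if (p : ℕ) ∈ insert n ((desSet n τ).image (· + 1)) then desNum n τ else desNum n τ + 1 := by
  rw [desNum, desSet_insertMax]
  split_ifs with h
  · exact card_image_of_injective _ (desShift_injective p)
  · rw [card_insert_of_notMem, card_image_of_injective _ (desShift_injective p), desNum]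
    simp only [mem_insert, mem_image_add_one, mem_image_desShift, not_or] at h ⊢
    grind

theorem eulerPoly_succ_s19 (n : ℕ) : eulerPoly (n + 1) = eulerianStep ℤ n (eulerPoly n) := by
  refine sum_X_pow_eq_eulerianStep insertMax_injective (fun τ => (desSet n τ).image (· + 1))
    (fun τ => ?_) (fun τ => card_image_of_injective _ (add_left_injective 1))
    desNum_insertMax
  intro j hj
  obtain ⟨i, hi, rfl⟩ := mem_image.mp hj
  have := mem_range.mp (desSet_subset_range τ hi)
  exact mem_range.mpr (by omega)

end Descents

section Excedances

variable {n : ℕ}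

def excSet (n : ℕ) (σ : Equiv.Perm (Fin n)) : Finset ℕ := (range n).filter fun i => i < pv n σ i

theorem excNum_eq_card_excSet (σ : Equiv.Perm (Fin n)) : excNum n σ = #(excSet n σ) := rfl

/-- In cycle notation: `n` is inserted right after `i`, i.e. `i ↦ n ↦ τ i`. -/
def insertMaxInCycle (τ : Equiv.Perm (Fin n)) (i : Fin (n + 1)) : Equiv.Perm (Fin (n + 1)) :=
  insertMax τ (Fin.last n) * Equiv.swap i (Fin.last n)

theorem insertMaxInCycle_apply_self (τ : Equiv.Perm (Fin n)) (i : Fin (n + 1)) :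
    insertMaxInCycle τ i i = Fin.last n := by
  rw [insertMaxInCycle, Equiv.Perm.mul_apply, Equiv.swap_apply_left, insertMax_apply_self]

theorem insertMaxInCycle_injective :
    Function.Injective fun x : Equiv.Perm (Fin n) × Fin (n + 1) => insertMaxInCycle x.1 x.2 := by
  rintro ⟨τ, i⟩ ⟨τ', i'⟩ h
  simp only at h
  have hi : i = i' := (insertMaxInCycle τ' i').injective <| by
    rw [insertMaxInCycle_apply_self, ← h, insertMaxInCycle_apply_self]
  subst hi
  obtain ⟨hτ, -⟩ := Prod.mk.inj <|
    insertMax_injective (a₁ := (τ, Fin.last n)) (a₂ := (τ', Fin.last n)) (mul_right_cancel h)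
  rw [hτ]

theorem pv_insertMaxInCycle_self (τ : Equiv.Perm (Fin n)) (i : Fin (n + 1)) :
    pv (n + 1) (insertMaxInCycle τ i) i = n := by
  rw [pv_of_lt i.isLt, Fin.eta, insertMaxInCycle_apply_self, Fin.val_last]

theorem pv_insertMaxInCycle_of_ne (τ : Equiv.Perm (Fin n)) {i : Fin (n + 1)} {k : ℕ} (hk : k < n)
    (hki : k ≠ i) : pv (n + 1) (insertMaxInCycle τ i) k = pv n τ k := by
  have hk' : (⟨k, by omega⟩ : Fin (n + 1)) = (Fin.last n).succAbove ⟨k, hk⟩ := by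
    rw [Fin.succAbove_last]; rfl
  rw [pv_of_lt (by omega), pv_of_lt hk, insertMaxInCycle, Equiv.Perm.mul_apply,
    Equiv.swap_apply_of_ne_of_ne (Fin.ne_of_val_ne hki) (Fin.ne_of_val_ne (by simp; omega)),
    hk', insertMax_apply_succAbove, Fin.val_castSucc]

theorem excSet_insertMaxInCycle (τ : Equiv.Perm (Fin n)) (i : Fin (n + 1)) :
    excSet (n + 1) (insertMaxInCycle τ i) =
      if (i : ℕ) ∈ insert n (excSet n τ) then excSet n τ else insert (i : ℕ) (excSet n τ) := by
  ext k
  have hn : n ∉ excSet n τ := by simp [excSet]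
  by_cases hki : k = i
  · subst hki
    simp only [excSet, mem_filter, mem_range, pv_insertMaxInCycle_self] at hn ⊢
    split_ifs with h <;> simp only [mem_insert, mem_filter, mem_range] at h ⊢ <;> grind
  · have hrhs : (k ∈ if (i : ℕ) ∈ insert n (excSet n τ) then excSet n τ
        else insert (i : ℕ) (excSet n τ)) ↔ k ∈ excSet n τ := by
      split_ifs <;> simp [hki]
    rw [hrhs]
    simp only [excSet, mem_filter, mem_range]
    by_cases hk : k < n
    · rw [pv_insertMaxInCycle_of_ne τ hk hki]
      omega
    · have : k < n + 1 → pv (n + 1) (insertMaxInCycle τ i) k < n + 1 := pv_lt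
      omega

theorem excNum_insertMaxInCycle (τ : Equiv.Perm (Fin n)) (i : Fin (n + 1)) :
    excNum (n + 1) (insertMaxInCycle τ i) =
      if (i : ℕ) ∈ insert n (excSet n τ) then excNum n τ else excNum n τ + 1 := by
  rw [excNum_eq_card_excSet, excSet_insertMaxInCycle, excNum_eq_card_excSet]
  split_ifs with h
  · rfl
  · exact card_insert_of_notMem fun h' => h (mem_insert_of_mem h')

theorem sum_X_pow_excNum_succ (n : ℕ) :
    ∑ σ : Equiv.Perm (Fin (n + 1)), (X : ℤ[X]) ^ excNum (n + 1) σ =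
      eulerianStep ℤ n (∑ τ : Equiv.Perm (Fin n), X ^ excNum n τ) :=
  sum_X_pow_eq_eulerianStep insertMaxInCycle_injective (excSet n) (fun _ => filter_subset _ _)
    (fun _ => rfl) excNum_insertMaxInCycle

end Excedances

theorem des_exc_equidistributed_general (n : ℕ) :
    (∑ σ : Equiv.Perm (Fin n), (X : Polynomial ℤ) ^ desNum n σ) =
    ∑ σ : Equiv.Perm (Fin n), (X : Polynomial ℤ) ^ excNum n σ := by
  induction n with
  | zero => rfl
  | succ n ih =>
    rw [sum_X_pow_excNum_succ, ← ih]
    exact eulerPoly_succ_s19 n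

theorem des_exc_equidistributed (n : ℕ) (hn : 1 ≤ n) :
    (∑ σ : Equiv.Perm (Fin n), (X : Polynomial ℤ) ^ desNum n σ) =
    ∑ σ : Equiv.Perm (Fin n), (X : Polynomial ℤ) ^ excNum n σ :=
  des_exc_equidistributed_general n
end
end
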